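/- arXiv:2404.02069 — 3 statements merged into one kernel-verified Lean document; each statement's English description precedes it below -/
import Mathlib

section
/- Let n = n_1 + … + n_p with n_1,…,n_p nonnegative integers (p ≥ 1), and let A be a subset of ℕ^n. Then there exists a numerical polynomial ω_A(t_1,…,t_p) in p variables such that: (i) ω_A(r_1,…,r_p) = Card V_A(r_1,…,r_p) for all sufficiently large (r_1,…,r_p) ∈ ℕ^p (i.e., there exists (s_1,…,s_p) ∈ ℕ^p such that the equality holds whenever r_i ≥ s_i for all i); and (ii) the total degree of ω_A is at most n and deg_{t_i} ω_A ≤ n_i for i = 1,…,p. -/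
open MvPolynomial

/-- A polynomial in `p` variables with rational coefficients is numerical if it takes
integer values for all sufficiently large integer arguments. -/
def IsNumerical {p : ℕ} (f : MvPolynomial (Fin p) ℚ) : Prop :=
  ∃ s : Fin p → ℤ, ∀ r : Fin p → ℤ, (∀ i, s i ≤ r i) →
    ∃ z : ℤ, MvPolynomial.eval (fun i => (r i : ℚ)) f = (z : ℚ)

/-- The binomial-coefficient polynomial `C(t_j + c, k)` in the variable `t_j`. -/
noncomputable def binomShift {p : ℕ} (j : Fin p) (c : ℤ) (k : ℕ) : MvPolynomial (Fin p) ℚ :=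
  (k.factorial : ℚ)⁻¹ • ∏ l ∈ Finset.range k, (X j + MvPolynomial.C ((c : ℚ) - (l : ℚ)))

/-- The sum of the entries of `v` over the `j`-th block of the partition `B`. -/
def blockSum {n p : ℕ} (B : Fin n → Fin p) (v : Fin n → ℕ) (j : Fin p) : ℕ :=
  ∑ i ∈ Finset.univ.filter (fun i => B i = j), v i

/-- `V_A`: the set of points of `ℕ^n` that are not ≥ (componentwise) any element of `A`. -/
def VSet {n : ℕ} (A : Set (Fin n → ℕ)) : Set (Fin n → ℕ) :=
  {v | ∀ a ∈ A, ¬ a ≤ v}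

/-! By Dickson's lemma `A` has finitely many minimal elements `M`, and `v ∈ V_A` iff `v` lies
above no element of `M`. Inclusion–exclusion over `S ⊆ M` writes `Card V_A(r)` as an alternating
sum of the numbers of `v ≥ sup S` with block sums `≤ r`; translating by `sup S` and counting by
stars and bars, each of these is `∏ⱼ C(rⱼ - |sup S|ⱼ + nⱼ, nⱼ)` as soon as `r` dominates the block
sums of `sup M`, which is a polynomial in `r` of degree `nⱼ` in `rⱼ`. -/

open Finset

theorem Nat.card_fun_sum_le_eq_choose (ι : Type*) [Fintype ι] (m : ℕ) :
    Nat.card {w : ι → ℕ // ∑ i, w i ≤ m} = (m + Fintype.card ι).choose (Fintype.card ι) := by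
  classical
  have slack : {w : ι → ℕ // ∑ i, w i ≤ m} ≃ {w : Option ι → ℕ // ∑ i, w i = m} :=
    { toFun w := ⟨fun o => o.elim (m - ∑ i, w.1 i) w.1, by
        simp only [Fintype.sum_option, Option.elim_none, Option.elim_some]; omega⟩
      invFun w := ⟨fun i => w.1 (some i),
        (Nat.le_add_left _ _).trans_eq ((Fintype.sum_option _).symm.trans w.2)⟩
      left_inv w := rfl
      right_inv w := by
        have := w.2
        rw [Fintype.sum_option] at this
        ext (_ | i)
        · simp only [Option.elim_none]; omega
        · rfl }
  rw [Nat.card_congr (slack.trans (Sym.equivNatSumOfFintype (Option ι) m).symm),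
    Sym.natCard_sym_eq_choose, Nat.card_eq_fintype_card, Fintype.card_option,
    Nat.add_right_comm, Nat.add_sub_cancel, ← Nat.choose_symm_add, add_comm]

theorem Nat.card_fun_sum_fiberwise_le_eq_prod_choose {ι κ : Type*} [Fintype ι] [Fintype κ]
    [DecidableEq κ] (f : ι → κ) (m : κ → ℕ) :
    Nat.card {v : ι → ℕ // ∀ j, ∑ i with f i = j, v i ≤ m j} =
      ∏ j, (m j + #{i | f i = j}).choose #{i | f i = j} := by
  have e : {v : ι → ℕ // ∀ j, ∑ i with f i = j, v i ≤ m j} ≃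
      ∀ j, {w : {i // f i = j} → ℕ // ∑ i, w i ≤ m j} :=
    (((Equiv.arrowCongr (Equiv.sigmaFiberEquiv f).symm (Equiv.refl ℕ)).trans
      (Equiv.piCurry fun _ _ => ℕ)).subtypeEquiv (fun v => by
        refine forall_congr' fun j => ?_
        rw [Finset.sum_subtype _ (p := fun i => f i = j) (fun i => by simp) v]
        rfl)).trans Equiv.subtypePiEquivPi
  rw [Nat.card_congr e, Nat.card_pi]
  refine Finset.prod_congr rfl fun j _ => ?_
  rw [Nat.card_fun_sum_le_eq_choose, Fintype.card_subtype]

theorem Finset.card_filter_forall_not_le {α : Type*} [SemilatticeSup α] [OrderBot α]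
    [DecidableEq α] [DecidableLE α] (U M : Finset α) :
    (#{v ∈ U | ∀ a ∈ M, ¬ a ≤ v} : ℤ) =
      ∑ S ∈ M.powerset, (-1) ^ #S * (#{v ∈ U | S.sup id ≤ v} : ℤ) := by
  have indicator (v : α) : (if ∀ a ∈ M, ¬ a ≤ v then 1 else 0 : ℤ) =
      ∑ S ∈ M.powerset, (-1) ^ #S * if S.sup id ≤ v then 1 else 0 := by
    calc (if ∀ a ∈ M, ¬ a ≤ v then 1 else 0 : ℤ)
        = ∏ a ∈ M, (1 - if a ≤ v then 1 else 0) := by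
          rw [← prod_boole]
          exact prod_congr rfl fun a _ => by split_ifs <;> simp
      _ = ∑ S ∈ M.powerset, (-1) ^ #S * ∏ a ∈ S, (if a ≤ v then 1 else 0 : ℤ) := by
          simp [prod_sub]
      _ = _ := by simp only [prod_boole, Finset.sup_le_iff, id]
  simp only [natCast_card_filter, indicator]
  rw [sum_comm]
  simp only [← mul_sum]

section blockSum

variable {n p : ℕ} (B : Fin n → Fin p)

theorem blockSum_add (v w : Fin n → ℕ) : blockSum B (v + w) = blockSum B v + blockSum B w :=
  funext fun _ => sum_add_distrib

theorem blockSum_mono : Monotone (blockSum B) :=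
  fun _ _ hvw _ => sum_le_sum fun i _ => hvw i

theorem le_blockSum (v : Fin n → ℕ) (i : Fin n) : v i ≤ blockSum B v (B i) :=
  single_le_sum (fun _ _ => Nat.zero_le _) (by simp)

def blockBox (r : Fin p → ℕ) : Finset (Fin n → ℕ) :=
  {v ∈ Fintype.piFinset fun i => range (r (B i) + 1) | ∀ j, blockSum B v j ≤ r j}

variable {B} in
theorem mem_blockBox {r : Fin p → ℕ} {v : Fin n → ℕ} : v ∈ blockBox B r ↔ blockSum B v ≤ r := by
  simp only [blockBox, mem_filter, Fintype.mem_piFinset, mem_range, Pi.le_def,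
    and_iff_right_iff_imp]
  exact fun h i => Nat.lt_succ_of_le ((le_blockSum B v i).trans (h (B i)))

theorem card_blockBox (m : Fin p → ℕ) :
    #(blockBox B m) = ∏ j, (m j + #{i | B i = j}).choose #{i | B i = j} := by
  rw [← Nat.card_eq_finsetCard, ← Nat.card_fun_sum_fiberwise_le_eq_prod_choose]
  exact Nat.card_congr (Equiv.subtypeEquivRight fun v => mem_blockBox)

open Classical in
theorem card_filter_le_blockBox (r : Fin p → ℕ) {b : Fin n → ℕ} (hb : blockSum B b ≤ r) :
    #{v ∈ blockBox B r | b ≤ v} = #(blockBox B (r - blockSum B b)) := by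
  symm
  refine card_nbij' (b + ·) (· - b) (fun w hw => ?_) (fun v hv => ?_)
    (fun w _ => add_tsub_cancel_left b w) (fun v hv => add_tsub_cancel_of_le (mem_filter.1 hv).2)
  · simp only [mem_coe, coe_filter, mem_blockBox, Set.mem_ofPred_eq, blockSum_add] at hw ⊢
    exact ⟨(le_tsub_iff_left hb).1 hw, le_self_add⟩
  · simp only [mem_coe, coe_filter, mem_blockBox, Set.mem_ofPred_eq] at hv ⊢
    refine le_tsub_of_add_le_right ?_
    rw [← blockSum_add, tsub_add_cancel_of_le hv.2]
    exact hv.1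

theorem ncard_forall_not_le_blockSum_le (M : Finset (Fin n → ℕ)) {r : Fin p → ℕ}
    (hr : blockSum B (M.sup id) ≤ r) :
    ({v | (∀ a ∈ M, ¬ a ≤ v) ∧ blockSum B v ≤ r}.ncard : ℤ) =
      ∑ S ∈ M.powerset, (-1) ^ #S *
        ∏ j, ((r j - blockSum B (S.sup id) j + #{i | B i = j}).choose #{i | B i = j} : ℤ) := by
  classical
  have hbox : {v | (∀ a ∈ M, ¬ a ≤ v) ∧ blockSum B v ≤ r} =
      ↑{v ∈ blockBox B r | ∀ a ∈ M, ¬ a ≤ v} := by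
    ext v
    simp [mem_blockBox, and_comm]
  rw [hbox, Set.ncard_coe_finset, card_filter_forall_not_le]
  refine sum_congr rfl fun S hSM => ?_
  have hSr : blockSum B (S.sup id) ≤ r :=
    (blockSum_mono B (sup_mono (mem_powerset.1 hSM))).trans hr
  rw [card_filter_le_blockBox B r hSr, card_blockBox]
  push_cast
  rfl

end blockSum

theorem exists_finset_forall_not_le_iff {α : Type*} [PartialOrder α] [WellQuasiOrderedLE α]
    (A : Set α) : ∃ M : Finset α, ∀ v, (∀ a ∈ A, ¬ a ≤ v) ↔ ∀ a ∈ M, ¬ a ≤ v := by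
  have hfin := WellQuasiOrderedLE.finite_of_isAntichain (setOfPred_minimal_antichain (· ∈ A))
  refine ⟨hfin.toFinset, fun v => ⟨fun h a ha => h a (hfin.mem_toFinset.1 ha).1, fun h a ha => ?_⟩⟩
  obtain ⟨b, hba, hb⟩ := exists_minimal_le_of_wellFoundedLT (· ∈ A) a ha
  exact fun hav => h b (hfin.mem_toFinset.2 hb) (hba.trans hav)

theorem isNumerical_of_eval_natCast {p : ℕ} {f : MvPolynomial (Fin p) ℚ} (s : Fin p → ℕ)
    (g : (Fin p → ℕ) → ℕ) (hf : ∀ r, s ≤ r → eval (fun i => ((r i : ℤ) : ℚ)) f = g r) :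
    IsNumerical f := by
  refine ⟨fun i => s i, fun r hr => ⟨g fun i => (r i).toNat, ?_⟩⟩
  have hr0 (i : Fin p) : 0 ≤ r i := (Int.natCast_nonneg _).trans (hr i)
  rw [Int.cast_natCast, ← hf _ fun i => (Int.le_toNat (hr0 i)).2 (hr i)]
  simp only [Int.toNat_of_nonneg (hr0 _)]

section binomShift

variable {p : ℕ}

theorem eval_binomShift (j : Fin p) (c : ℤ) (k : ℕ) (x : Fin p → ℚ) :
    eval x (binomShift j c k) = (k.factorial : ℚ)⁻¹ * ∏ l ∈ range k, (x j + (c - l)) := by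
  simp [binomShift, smul_eq_C_mul, map_prod]

theorem eval_binomShift_of_add_eq {j : Fin p} {c : ℤ} (k : ℕ) {x : Fin p → ℚ} {m : ℕ}
    (hm : x j + c = m) : eval x (binomShift j c k) = m.choose k := by
  rw [eval_binomShift]
  simp_rw [← add_sub_assoc, hm, prod_range_natCast_sub, ← Nat.descFactorial_eq_prod_range,
    Nat.descFactorial_eq_factorial_mul_choose]
  push_cast
  field_simp

theorem degreeOf_binomShift_le (i j : Fin p) (c : ℤ) (k : ℕ) :
    degreeOf i (binomShift j c k) ≤ if i = j then k else 0 := by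
  rw [binomShift, smul_eq_C_mul]
  refine (degreeOf_C_mul_le _ _ _).trans ((degreeOf_prod_le _ _ _).trans ?_)
  calc ∑ l ∈ range k, degreeOf i (X j + C ((c : ℚ) - l))
      ≤ ∑ l ∈ range k, if i = j then 1 else 0 := sum_le_sum fun l _ =>
        (degreeOf_add_le _ _ _).trans (by rw [degreeOf_X, degreeOf_C]; split_ifs <;> simp)
    _ = if i = j then k else 0 := by split_ifs <;> simp

theorem totalDegree_binomShift_le (j : Fin p) (c : ℤ) (k : ℕ) :
    (binomShift j c k).totalDegree ≤ k := by
  rw [binomShift]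
  refine (totalDegree_smul_le (k.factorial : ℚ)⁻¹ _).trans ((totalDegree_finsetProd _ _).trans ?_)
  calc ∑ l ∈ range k, (X j + C ((c : ℚ) - l) : MvPolynomial (Fin p) ℚ).totalDegree
      ≤ ∑ l ∈ range k, 1 := sum_le_sum fun l _ =>
        (totalDegree_add _ _).trans (by rw [totalDegree_X, totalDegree_C]; simp)
    _ = k := by simp

variable (c : Fin p → ℤ) (k : Fin p → ℕ)

theorem eval_prod_binomShift_of_add_eq {x : Fin p → ℚ} {m : Fin p → ℕ}
    (hm : ∀ j, x j + c j = m j) :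
    eval x (∏ j, binomShift j (c j) (k j)) = ∏ j, ((m j).choose (k j) : ℚ) := by
  simp only [map_prod, eval_binomShift_of_add_eq _ (hm _)]

theorem totalDegree_prod_binomShift_le :
    (∏ j, binomShift j (c j) (k j)).totalDegree ≤ ∑ j, k j :=
  (totalDegree_finsetProd _ _).trans (sum_le_sum fun _ _ => totalDegree_binomShift_le _ _ _)

theorem degreeOf_prod_binomShift_le (i : Fin p) :
    (∏ j, binomShift j (c j) (k j)).degreeOf i ≤ k i :=
  calc (∏ j, binomShift j (c j) (k j)).degreeOf i
      ≤ ∑ j, if i = j then k j else 0 :=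
        (degreeOf_prod_le _ _ _).trans (sum_le_sum fun _ _ => degreeOf_binomShift_le _ _ _ _)
    _ = k i := by simp

end binomShift

theorem statement_1_general (p n : ℕ)
    (nn : Fin p → ℕ) (hn : ∑ j, nn j = n)
    (B : Fin n → Fin p)
    (hBcard : ∀ j, (Finset.univ.filter fun i => B i = j).card = nn j)
    (A : Set (Fin n → ℕ)) :
    ∃ ω : MvPolynomial (Fin p) ℚ, IsNumerical ω ∧
      (∃ s : Fin p → ℕ, ∀ r : Fin p → ℕ, (∀ i, s i ≤ r i) →
        MvPolynomial.eval (fun i => ((r i : ℤ) : ℚ)) ω =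
          (({v ∈ VSet A | ∀ j, blockSum B v j ≤ r j} : Set (Fin n → ℕ)).ncard : ℚ)) ∧
      ω.totalDegree ≤ n ∧ ∀ i, ω.degreeOf i ≤ nn i := by
  obtain ⟨M, hM⟩ := exists_finset_forall_not_le_iff A
  set ω := ∑ S ∈ M.powerset,
    (-1 : ℚ) ^ #S • ∏ j, binomShift j (nn j - blockSum B (S.sup id) j) (nn j)
  have hω (r : Fin p → ℕ) (hr : blockSum B (M.sup id) ≤ r) :
      eval (fun i => ((r i : ℤ) : ℚ)) ω =
        ({v ∈ VSet A | ∀ j, blockSum B v j ≤ r j} : Set (Fin n → ℕ)).ncard := by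
    have hset : {v ∈ VSet A | ∀ j, blockSum B v j ≤ r j} =
        {v | (∀ a ∈ M, ¬ a ≤ v) ∧ blockSum B v ≤ r} :=
      Set.ext fun v => and_congr_left' (hM v)
    rw [hset, ← Int.cast_natCast, ncard_forall_not_le_blockSum_le B M hr]
    simp only [ω, hBcard, map_sum, smul_eval]
    push_cast
    refine sum_congr rfl fun S hSM => ?_
    have hSr : blockSum B (S.sup id) ≤ r :=
      (blockSum_mono B (sup_mono (mem_powerset.1 hSM))).trans hr
    rw [eval_prod_binomShift_of_add_eq _ _ (m := fun j => r j - blockSum B (S.sup id) j + nn j)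
      fun j => by push_cast [Nat.cast_sub (hSr j)]; ring]
  refine ⟨ω, isNumerical_of_eval_natCast _ _ hω, ⟨_, hω⟩, ?_, fun i => ?_⟩
  · exact totalDegree_finsetSum_le fun S _ =>
      (totalDegree_smul_le _ _).trans ((totalDegree_prod_binomShift_le _ _).trans hn.le)
  · refine (degreeOf_sum_le _ _ _).trans (Finset.sup_le fun S _ => ?_)
    rw [smul_eq_C_mul]
    exact (degreeOf_C_mul_le _ _ _).trans (degreeOf_prod_binomShift_le _ _ i)

theorem statement_1 (p n : ℕ) (hp : 1 ≤ p)
    (nn : Fin p → ℕ) (hn : ∑ j, nn j = n)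
    (B : Fin n → Fin p) (hBmono : Monotone B)
    (hBcard : ∀ j, (Finset.univ.filter fun i => B i = j).card = nn j)
    (A : Set (Fin n → ℕ)) :
    ∃ ω : MvPolynomial (Fin p) ℚ, IsNumerical ω ∧
      (∃ s : Fin p → ℕ, ∀ r : Fin p → ℕ, (∀ i, s i ≤ r i) →
        MvPolynomial.eval (fun i => ((r i : ℤ) : ℚ)) ω =
          (({v ∈ VSet A | ∀ j, blockSum B v j ≤ r j} : Set (Fin n → ℕ)).ncard : ℚ)) ∧
      ω.totalDegree ≤ n ∧ ∀ i, ω.degreeOf i ≤ nn i :=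
  statement_1_general p n nn hn B hBcard A
end

section
/- Let K be a field of characteristic zero, A_n(K) the Weyl algebra, M a finitely generated left A_n(K)-module, and let ψ_M(t) = a_d t^d + … + a_1 t + a_0 be the Bernstein polynomial of M associated with a finite system of generators g_1,…,g_p (so ψ_M(r) = dim_K Σ_{i=1}^p W_r g_i for all sufficiently large r). Then the degree d of ψ_M and the integer d!·a_d do not depend on the choice of the finite system of generators of M. -/
set_option synthInstance.maxHeartbeats 400000
set_option maxHeartbeats 1000000

open MvPolynomial

noncomputable def weylGens (n : ℕ) (K : Type) [Field K] :
    Set (Module.End K (MvPolynomial (Fin n) K)) :=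
  (Set.range fun i : Fin n =>
      (LinearMap.mulLeft K (X i : MvPolynomial (Fin n) K) : Module.End K (MvPolynomial (Fin n) K))) ∪
  (Set.range fun i : Fin n => ((pderiv i).toLinearMap : Module.End K (MvPolynomial (Fin n) K)))

noncomputable def WeylAlg (n : ℕ) (K : Type) [Field K] :
    Subalgebra K (Module.End K (MvPolynomial (Fin n) K)) :=
  Algebra.adjoin K (weylGens n K)

noncomputable def wx (n : ℕ) (K : Type) [Field K] (i : Fin n) : WeylAlg n K :=
  ⟨LinearMap.mulLeft K (X i), Algebra.subset_adjoin (Set.mem_union_left _ ⟨i, rfl⟩)⟩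

noncomputable def wd (n : ℕ) (K : Type) [Field K] (i : Fin n) : WeylAlg n K :=
  ⟨(pderiv i).toLinearMap, Algebra.subset_adjoin (Set.mem_union_right _ ⟨i, rfl⟩)⟩

noncomputable def wMono (n : ℕ) (K : Type) [Field K] (α β : Fin n → ℕ) : WeylAlg n K :=
  (((List.finRange n).map fun i => wx n K i ^ α i).prod) *
  (((List.finRange n).map fun i => wd n K i ^ β i).prod)

def ordTot (n : ℕ) (α β : Fin n → ℕ) : ℕ := (∑ i, α i) + ∑ i, β i

noncomputable def bernW (n : ℕ) (K : Type) [Field K] (r : ℤ) : Submodule K (WeylAlg n K) :=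
  Submodule.span K {D | ∃ α β : Fin n → ℕ, (ordTot n α β : ℤ) ≤ r ∧ D = wMono n K α β}

noncomputable def modFil (n : ℕ) (K : Type) [Field K] (M : Type) [AddCommGroup M]
    [Module K M] [Module (WeylAlg n K) M] (m : ℕ) (g : Fin m → M) (r : ℤ) :
    Submodule K M :=
  Submodule.span K {x | ∃ i, ∃ D ∈ bernW n K r, x = D • g i}

/-! The Bernstein filtration is multiplicative, `W_r W_s ⊆ W_(r+s)`, and exhaustive.
Multiplicativity comes from the normal-ordering rule `∂^β x_i = x_i ∂^β + β_i ∂^(β - e_i)`, which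
gives `W_r x_i, W_r ∂_i ⊆ W_(r+1)`. Writing each `h_j` as `∑ D_jk g_k` with all `D_jk ∈ W_c` then
gives `∑ W_r h_j ⊆ ∑ W_(r+c) g_k`, and symmetrically, so `ψ(r) ≤ ψ'(r + c)` and
`ψ'(r) ≤ ψ(r + c')` for large `r`. As an eventually nonnegative polynomial has nonnegative leading
coefficient, the pairs `(deg, leading coefficient)` of `ψ` and `ψ'` dominate each other
lexicographically, hence agree. -/

theorem pow_mul_eq_mul_pow_add_nsmul {A : Type*} [Ring A] {x d : A} (h : d * x = x * d + 1)
    (k : ℕ) : d ^ k * x = x * d ^ k + k • d ^ (k - 1) := by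
  induction k with
  | zero => simp
  | succ k ih =>
    calc d ^ (k + 1) * x = d * (d ^ k * x) := by rw [pow_succ', mul_assoc]
      _ = x * d ^ (k + 1) + d ^ k + k • (d * d ^ (k - 1)) := by
        rw [ih, mul_add, ← mul_assoc, h, mul_smul_comm, add_mul, one_mul, mul_assoc, ← pow_succ']
      _ = x * d ^ (k + 1) + (k + 1) • d ^ k := by
        rcases k.eq_zero_or_pos with rfl | hk
        · simp
        · rw [mul_pow_sub_one hk.ne', succ_nsmul]
          abel

theorem MvPolynomial.pderiv_pderiv_comm {R σ : Type*} [CommSemiring R] (i j : σ)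
    (f : MvPolynomial σ R) : pderiv i (pderiv j f) = pderiv j (pderiv i f) := by
  induction f using MvPolynomial.induction_on with
  | C => simp
  | add p q hp hq => simp [hp, hq]
  | mul_X p k hp =>
    classical
    simp only [Derivation.leibniz, pderiv_X, Pi.single_apply, smul_eq_mul, mul_ite, mul_one,
      mul_zero, map_add, apply_ite (pderiv i), apply_ite (pderiv j), map_zero, hp]
    abel

theorem List.prod_map_pow_add {ι A : Type*} [Monoid A] {f : ι → A}
    (hf : ∀ i j, Commute (f i) (f j)) (a b : ι → ℕ) (l : List ι) :
    (l.map fun j => f j ^ (a j + b j)).prod =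
      (l.map fun j => f j ^ a j).prod * (l.map fun j => f j ^ b j).prod := by
  induction l with
  | nil => simp
  | cons i l ih =>
    have hc : Commute (f i ^ b i) (l.map fun j => f j ^ a j).prod :=
      Commute.list_prod_right _ _ fun _ hy => by
        obtain ⟨j, -, rfl⟩ := List.mem_map.mp hy
        exact (hf i j).pow_pow _ _
    simp only [List.map_cons, List.prod_cons]
    rw [ih, pow_add, mul_assoc, mul_assoc, ← mul_assoc (f i ^ b i), hc.eq, mul_assoc]

section WeylRelations

variable {n : ℕ} {K : Type} [Field K]

theorem wx_commute (i j : Fin n) : Commute (wx n K i) (wx n K j) := by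
  apply Subtype.ext
  apply LinearMap.ext
  intro p
  show X i * (X j * p) = X j * (X i * p)
  ring

theorem wd_commute (i j : Fin n) : Commute (wd n K i) (wd n K j) := by
  apply Subtype.ext
  apply LinearMap.ext
  exact pderiv_pderiv_comm i j

theorem wd_commute_wx {i j : Fin n} (h : i ≠ j) : Commute (wd n K i) (wx n K j) := by
  apply Subtype.ext
  apply LinearMap.ext
  intro p
  suffices e : pderiv i (X j * p) = X j * pderiv i p by exact e
  rw [pderiv_mul, pderiv_X_of_ne h.symm, zero_mul, zero_add]

theorem wd_mul_wx (i : Fin n) : wd n K i * wx n K i = wx n K i * wd n K i + 1 := by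
  apply Subtype.ext
  apply LinearMap.ext
  intro p
  suffices e : pderiv i (X i * p) = X i * pderiv i p + p by exact e
  rw [pderiv_mul, pderiv_X_self, one_mul, add_comm]

end WeylRelations

section Monomials

variable {n : ℕ} {K : Type} [Field K]

noncomputable def wxMono (n : ℕ) (K : Type) [Field K] (α : Fin n → ℕ) : WeylAlg n K :=
  ((List.finRange n).map fun i => wx n K i ^ α i).prod

noncomputable def wdMono (n : ℕ) (K : Type) [Field K] (β : Fin n → ℕ) : WeylAlg n K :=
  ((List.finRange n).map fun i => wd n K i ^ β i).prod

theorem wMono_eq_mul (α β : Fin n → ℕ) : wMono n K α β = wxMono n K α * wdMono n K β := rfl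

theorem wxMono_add (α α' : Fin n → ℕ) : wxMono n K (α + α') = wxMono n K α * wxMono n K α' :=
  List.prod_map_pow_add wx_commute _ _ _

theorem wdMono_add (β β' : Fin n → ℕ) : wdMono n K (β + β') = wdMono n K β * wdMono n K β' :=
  List.prod_map_pow_add wd_commute _ _ _

theorem wxMono_single (i : Fin n) (c : ℕ) : wxMono n K (Pi.single i c) = wx n K i ^ c := by
  rw [wxMono, List.prod_map_eq_pow_single i _ fun j hj _ => by rw [Pi.single_eq_of_ne hj, pow_zero],
    List.count_finRange, pow_one, Pi.single_eq_same]

theorem wdMono_single (i : Fin n) (c : ℕ) : wdMono n K (Pi.single i c) = wd n K i ^ c := by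
  rw [wdMono, List.prod_map_eq_pow_single i _ fun j hj _ => by rw [Pi.single_eq_of_ne hj, pow_zero],
    List.count_finRange, pow_one, Pi.single_eq_same]

theorem wMono_zero : wMono n K 0 0 = 1 := by
  simp [wMono_eq_mul, wxMono, wdMono]

theorem wx_commute_wdMono {β : Fin n → ℕ} {i : Fin n} (hβ : β i = 0) :
    Commute (wx n K i) (wdMono n K β) :=
  Commute.list_prod_right _ _ fun _ hy => by
    obtain ⟨j, -, rfl⟩ := List.mem_map.mp hy
    rcases eq_or_ne j i with rfl | hne
    · rw [hβ, pow_zero]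
      exact Commute.one_right _
    · exact (wd_commute_wx hne).symm.pow_right _

theorem wdMono_add_single_mul_wx {β : Fin n → ℕ} {i : Fin n} (hβ : β i = 0) (k : ℕ) :
    wdMono n K (β + Pi.single i k) * wx n K i =
      wx n K i * wdMono n K (β + Pi.single i k) + k • wdMono n K (β + Pi.single i (k - 1)) := by
  rw [wdMono_add, wdMono_add, wdMono_single, wdMono_single, mul_assoc,
    pow_mul_eq_mul_pow_add_nsmul (A := WeylAlg n K) (wd_mul_wx i), mul_add, ← mul_assoc,
    ← mul_assoc, ← (wx_commute_wdMono hβ).eq, mul_smul_comm]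

theorem wdMono_mul_wx (β : Fin n → ℕ) (i : Fin n) :
    wdMono n K β * wx n K i = wx n K i * wdMono n K β + β i • wdMono n K (β - Pi.single i 1) := by
  have hsplit (k : ℕ) : Function.update β i k = Function.update β i 0 + Pi.single i k := by
    funext j
    rcases eq_or_ne j i with rfl | hne <;> simp [*]
  have hpred : Function.update β i (β i - 1) = β - Pi.single i 1 := by
    funext j
    rcases eq_or_ne j i with rfl | hne <;> simp [*]
  have := wdMono_add_single_mul_wx (K := K) (Function.update_self i 0 β) (β i)
  rwa [← hsplit, ← hsplit, Function.update_eq_self, hpred] at this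

theorem wMono_mul_wx (α β : Fin n → ℕ) (i : Fin n) :
    wMono n K α β * wx n K i =
      wMono n K (α + Pi.single i 1) β + β i • wMono n K α (β - Pi.single i 1) := by
  rw [wMono_eq_mul, mul_assoc, wdMono_mul_wx, mul_add, ← mul_assoc, mul_smul_comm, wMono_eq_mul,
    wMono_eq_mul, wxMono_add, wxMono_single, pow_one]

theorem wMono_mul_wd (α β : Fin n → ℕ) (i : Fin n) :
    wMono n K α β * wd n K i = wMono n K α (β + Pi.single i 1) := by
  rw [wMono_eq_mul, wMono_eq_mul, mul_assoc, wdMono_add, wdMono_single, pow_one]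

end Monomials

section BernsteinFiltration

variable {n : ℕ} {K : Type} [Field K]

theorem ordTot_add_single_left (α β : Fin n → ℕ) (i : Fin n) :
    ordTot n (α + Pi.single i 1) β = ordTot n α β + 1 := by
  simp only [ordTot, Pi.add_apply, Finset.sum_add_distrib, Finset.sum_pi_single', Finset.mem_univ,
    if_true]
  omega

theorem ordTot_add_single_right (α β : Fin n → ℕ) (i : Fin n) :
    ordTot n α (β + Pi.single i 1) = ordTot n α β + 1 := by
  simp only [ordTot, Pi.add_apply, Finset.sum_add_distrib, Finset.sum_pi_single', Finset.mem_univ,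
    if_true]
  omega

theorem ordTot_sub_single_right_le (α β : Fin n → ℕ) (i : Fin n) :
    ordTot n α (β - Pi.single i 1) ≤ ordTot n α β :=
  Nat.add_le_add_left (Finset.sum_le_sum fun _ _ => Nat.sub_le _ _) _

theorem wMono_mem_bernW {α β : Fin n → ℕ} {r : ℤ} (h : (ordTot n α β : ℤ) ≤ r) :
    wMono n K α β ∈ bernW n K r :=
  Submodule.subset_span ⟨α, β, h, rfl⟩

theorem bernW_mono : Monotone (bernW n K) := fun _ _ h =>
  Submodule.span_mono fun _ ⟨α, β, hab, hD⟩ => ⟨α, β, hab.trans h, hD⟩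

theorem one_mem_bernW_zero : (1 : WeylAlg n K) ∈ bernW n K 0 :=
  wMono_zero (K := K) ▸ wMono_mem_bernW (by simp [ordTot])

theorem mul_mem_bernW_of_forall_wMono {b : WeylAlg n K} {r s : ℤ}
    (hb : ∀ α β, (ordTot n α β : ℤ) ≤ r → wMono n K α β * b ∈ bernW n K s)
    {a : WeylAlg n K} (ha : a ∈ bernW n K r) : a * b ∈ bernW n K s :=
  (Submodule.span_le (p := (bernW n K s).comap (LinearMap.mulRight K b))).2
    (by rintro _ ⟨α, β, h, rfl⟩; exact hb α β h) ha

theorem mul_wx_mem_bernW {a : WeylAlg n K} {r : ℤ} (ha : a ∈ bernW n K r) (i : Fin n) :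
    a * wx n K i ∈ bernW n K (r + 1) := by
  refine mul_mem_bernW_of_forall_wMono (fun α β h => ?_) ha
  rw [wMono_mul_wx]
  refine add_mem (wMono_mem_bernW ?_) (nsmul_mem (wMono_mem_bernW ?_) _)
  · rw [ordTot_add_single_left]
    push_cast
    omega
  · have := ordTot_sub_single_right_le α β i
    omega

theorem mul_wd_mem_bernW {a : WeylAlg n K} {r : ℤ} (ha : a ∈ bernW n K r) (i : Fin n) :
    a * wd n K i ∈ bernW n K (r + 1) := by
  refine mul_mem_bernW_of_forall_wMono (fun α β h => ?_) ha
  rw [wMono_mul_wd]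
  refine wMono_mem_bernW ?_
  rw [ordTot_add_single_right]
  push_cast
  omega

/-- Closed under products by construction; `bernW ≤ bernWMultiplier` is then the multiplicativity
of the Bernstein filtration. -/
def bernWMultiplier (n : ℕ) (K : Type) [Field K] (r : ℤ) : Submodule K (WeylAlg n K) where
  carrier := {a | ∀ s, ∀ b ∈ bernW n K s, b * a ∈ bernW n K (s + r)}
  add_mem' ha ha' s b hb := by
    rw [mul_add]
    exact add_mem (ha s b hb) (ha' s b hb)
  zero_mem' s b _ := by
    rw [mul_zero]
    exact zero_mem _
  smul_mem' c a ha s b hb := by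
    rw [mul_smul_comm]
    exact Submodule.smul_mem _ c (ha s b hb)

instance : SetLike.GradedMonoid (bernWMultiplier n K) where
  one_mem s b hb := by rwa [mul_one, add_zero]
  mul_mem r r' a a' ha ha' s b hb := by
    rw [← mul_assoc, ← add_assoc]
    exact ha' _ _ (ha s b hb)

theorem wx_mem_bernWMultiplier (i : Fin n) : wx n K i ∈ bernWMultiplier n K 1 :=
  fun _ _ hb => mul_wx_mem_bernW hb i

theorem wd_mem_bernWMultiplier (i : Fin n) : wd n K i ∈ bernWMultiplier n K 1 :=
  fun _ _ hb => mul_wd_mem_bernW hb i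

theorem bernWMultiplier_mono : Monotone (bernWMultiplier n K) := fun _ _ h _ ha s b hb =>
  bernW_mono (by omega) (ha s b hb)

theorem wMono_mem_bernWMultiplier (α β : Fin n → ℕ) :
    wMono n K α β ∈ bernWMultiplier n K (ordTot n α β) := by
  have hx : wxMono n K α ∈ bernWMultiplier n K (∑ i, (α i : ℤ)) := by
    rw [Fin.sum_univ_def]
    exact SetLike.list_prod_map_mem_graded _ _ _ fun i _ => by
      simpa using SetLike.pow_mem_graded (α i) (wx_mem_bernWMultiplier i)
  have hd : wdMono n K β ∈ bernWMultiplier n K (∑ i, (β i : ℤ)) := by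
    rw [Fin.sum_univ_def]
    exact SetLike.list_prod_map_mem_graded _ _ _ fun i _ => by
      simpa using SetLike.pow_mem_graded (β i) (wd_mem_bernWMultiplier i)
  rw [wMono_eq_mul]
  simpa [ordTot] using SetLike.mul_mem_graded hx hd

theorem mul_mem_bernW {r s : ℤ} {a b : WeylAlg n K} (ha : a ∈ bernW n K r)
    (hb : b ∈ bernW n K s) : a * b ∈ bernW n K (r + s) := by
  have : bernW n K s ≤ bernWMultiplier n K s := Submodule.span_le.2 <| by
    rintro _ ⟨α, β, h, rfl⟩
    exact bernWMultiplier_mono h (wMono_mem_bernWMultiplier α β)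
  exact this hb r a ha

theorem exists_mem_bernW (a : WeylAlg n K) : ∃ r, a ∈ bernW n K r := by
  refine Algebra.adjoin_induction (p := fun x hx => ∃ r, (⟨x, hx⟩ : WeylAlg n K) ∈ bernW n K r)
    ?_ ?_ ?_ ?_ a.2
  · rintro x (⟨i, rfl⟩ | ⟨i, rfl⟩)
    · exact ⟨1, (one_mul (wx n K i)).subst (mul_wx_mem_bernW one_mem_bernW_zero i)⟩
    · exact ⟨1, (one_mul (wd n K i)).subst (mul_wd_mem_bernW one_mem_bernW_zero i)⟩
  · intro c
    refine ⟨0, ?_⟩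
    change algebraMap K (WeylAlg n K) c ∈ _
    rw [Algebra.algebraMap_eq_smul_one]
    exact Submodule.smul_mem _ _ one_mem_bernW_zero
  · rintro x y _ _ ⟨r, hx⟩ ⟨s, hy⟩
    exact ⟨max r s, add_mem (bernW_mono (le_max_left r s) hx) (bernW_mono (le_max_right r s) hy)⟩
  · rintro x y _ _ ⟨r, hx⟩ ⟨s, hy⟩
    exact ⟨r + s, mul_mem_bernW hx hy⟩

theorem eventually_mem_bernW (a : WeylAlg n K) : ∀ᶠ r in Filter.atTop, a ∈ bernW n K r :=
  let ⟨r, hr⟩ := exists_mem_bernW a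
  Filter.eventually_atTop.2 ⟨r, fun _ hs => bernW_mono hs hr⟩

end BernsteinFiltration

section ModuleFiltration

variable {n : ℕ} {K : Type} [Field K] {M : Type} [AddCommGroup M] [Module K M]
  [Module (WeylAlg n K) M]

theorem finite_setOf_wMono_ordTot_le (r : ℤ) :
    {D | ∃ α β : Fin n → ℕ, (ordTot n α β : ℤ) ≤ r ∧ D = wMono n K α β}.Finite := by
  let N : Fin n → ℕ := fun _ => r.toNat
  refine (((Set.finite_Iic N).prod (Set.finite_Iic N)).image fun p => wMono n K p.1 p.2).subset ?_
  rintro _ ⟨α, β, h, rfl⟩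
  have hle {γ : Fin n → ℕ} (hγ : ∑ i, γ i ≤ r.toNat) : γ ∈ Set.Iic N := fun j =>
    (Finset.single_le_sum (fun i _ => Nat.zero_le (γ i)) (Finset.mem_univ j)).trans hγ
  unfold ordTot at h
  exact ⟨(α, β), ⟨hle (γ := α) (by omega), hle (γ := β) (by omega)⟩, rfl⟩

theorem modFil_le_span_smul_wMono [IsScalarTower K (WeylAlg n K) M] {m : ℕ} (g : Fin m → M)
    (r : ℤ) : modFil n K M m g r ≤ Submodule.span K (⋃ i, (· • g i) ''
      {D | ∃ α β : Fin n → ℕ, (ordTot n α β : ℤ) ≤ r ∧ D = wMono n K α β}) :=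
  Submodule.span_le.2 <| by
    rintro _ ⟨i, D, hD, rfl⟩
    have := Submodule.mem_map_of_mem
      (f := (LinearMap.toSpanSingleton (WeylAlg n K) M (g i)).restrictScalars K) hD
    rw [bernW, Submodule.map_span] at this
    exact Submodule.span_mono (Set.subset_iUnion_of_subset i subset_rfl) this

instance [IsScalarTower K (WeylAlg n K) M] {m : ℕ} (g : Fin m → M) (r : ℤ) :
    FiniteDimensional K (modFil n K M m g r) :=
  have : FiniteDimensional K (Submodule.span K (⋃ i, (· • g i) ''
      {D | ∃ α β : Fin n → ℕ, (ordTot n α β : ℤ) ≤ r ∧ D = wMono n K α β})) :=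
    FiniteDimensional.span_of_finite K
      (Set.finite_iUnion fun _ => (finite_setOf_wMono_ordTot_le r).image _)
  Submodule.finiteDimensional_of_le (modFil_le_span_smul_wMono g r)

theorem exists_modFil_le_modFil_add {m q : ℕ} {g : Fin m → M} (h : Fin q → M)
    (hg : Submodule.span (WeylAlg n K) (Set.range g) = ⊤) :
    ∃ c : ℤ, ∀ r, modFil n K M q h r ≤ modFil n K M m g (r + c) := by
  have hD (j : Fin q) : ∃ D : Fin m → WeylAlg n K, ∑ k, D k • g k = h j :=
    (Submodule.mem_span_range_iff_exists_fun _).1 (hg ▸ Submodule.mem_top)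
  choose D hD using hD
  obtain ⟨c, hc⟩ := (Filter.eventually_all.2 fun jk : Fin q × Fin m =>
    eventually_mem_bernW (D jk.1 jk.2)).exists
  refine ⟨c, fun r => Submodule.span_le.2 ?_⟩
  rintro _ ⟨j, E, hE, rfl⟩
  rw [← hD j, Finset.smul_sum]
  exact Submodule.sum_mem _ fun k _ =>
    Submodule.subset_span ⟨k, E * D j k, mul_mem_bernW hE (hc (j, k)), smul_smul _ _ _⟩

end ModuleFiltration

namespace Polynomial

open Filter

variable {𝕜 : Type*} [NormedField 𝕜] [LinearOrder 𝕜] [IsStrictOrderedRing 𝕜] [OrderTopology 𝕜]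
  [Archimedean 𝕜]

theorem leadingCoeff_nonneg_of_eventually_nonneg {p : 𝕜[X]}
    (hp : ∀ᶠ r : ℤ in atTop, 0 ≤ p.eval (r : 𝕜)) : 0 ≤ p.leadingCoeff := by
  by_contra! hlc
  rcases le_or_gt p.degree 0 with hdeg | hdeg
  · have hconst (x : 𝕜) : p.eval x = p.leadingCoeff := by
      rw [eq_C_of_degree_le_zero hdeg]
      simp
    obtain ⟨r, hr⟩ := hp.exists
    exact (hconst r ▸ hr).not_gt hlc
  · have hbot := (p.tendsto_atBot_of_leadingCoeff_nonpos hdeg hlc.le).comp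
      tendsto_intCast_atTop_atTop
    obtain ⟨r, h₁, h₂⟩ := (hp.and (hbot.eventually_lt_atBot 0)).exists
    exact h₂.not_ge h₁

theorem toLex_natDegree_leadingCoeff_le {p q : 𝕜[X]}
    (hp : ∀ᶠ r : ℤ in atTop, 0 ≤ p.eval (r : 𝕜))
    (hpq : ∀ᶠ r : ℤ in atTop, p.eval (r : 𝕜) ≤ q.eval (r : 𝕜)) :
    toLex (p.natDegree, p.leadingCoeff) ≤ toLex (q.natDegree, q.leadingCoeff) := by
  have hlp := leadingCoeff_nonneg_of_eventually_nonneg hp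
  have hlq := leadingCoeff_nonneg_of_eventually_nonneg ((hp.and hpq).mono fun _ h => h.1.trans h.2)
  have hlqp := leadingCoeff_nonneg_of_eventually_nonneg (p := q - p)
    (hpq.mono fun r h => by simpa using h)
  rw [Prod.Lex.toLex_le_toLex]
  rcases lt_trichotomy p.natDegree q.natDegree with hd | hd | hd
  · exact .inl hd
  · refine .inr ⟨hd, not_lt.1 fun hlc => ?_⟩
    have hcoeff : (q - p).coeff q.natDegree = q.leadingCoeff - p.leadingCoeff := by
      rw [coeff_sub, leadingCoeff, leadingCoeff, hd]
    have hdeg : (q - p).natDegree = q.natDegree :=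
      le_antisymm ((natDegree_sub_le _ _).trans (by rw [hd, max_self]))
        (le_natDegree_of_ne_zero (by rw [hcoeff]; linarith))
    rw [leadingCoeff, hdeg, hcoeff] at hlqp
    linarith
  · rw [leadingCoeff_sub_of_degree_lt' (degree_lt_degree hd)] at hlqp
    have hp0 : p = 0 := leadingCoeff_eq_zero.1 (le_antisymm (by linarith) hlp)
    simp [hp0] at hd

theorem natDegree_eq_and_leadingCoeff_eq_of_eventually_le_shift {p q : 𝕜[X]} {a b : ℤ}
    (hp : ∀ᶠ r : ℤ in atTop, 0 ≤ p.eval (r : 𝕜)) (hq : ∀ᶠ r : ℤ in atTop, 0 ≤ q.eval (r : 𝕜))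
    (hpq : ∀ᶠ r : ℤ in atTop, p.eval (r : 𝕜) ≤ q.eval ((r + a : ℤ) : 𝕜))
    (hqp : ∀ᶠ r : ℤ in atTop, q.eval (r : 𝕜) ≤ p.eval ((r + b : ℤ) : 𝕜)) :
    p.natDegree = q.natDegree ∧ p.leadingCoeff = q.leadingCoeff := by
  have h₁ := toLex_natDegree_leadingCoeff_le (q := taylor (a : 𝕜) q) hp
    (hpq.mono fun r h => by rwa [taylor_eval, ← Int.cast_add])
  have h₂ := toLex_natDegree_leadingCoeff_le (q := taylor (b : 𝕜) p) hq
    (hqp.mono fun r h => by rwa [taylor_eval, ← Int.cast_add])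
  rw [natDegree_taylor, leadingCoeff_taylor] at h₁ h₂
  simpa using le_antisymm h₁ h₂

end Polynomial

theorem statement_7_general (n : ℕ) (K : Type) [Field K]
    (M : Type) [AddCommGroup M] [Module K M] [Module (WeylAlg n K) M]
    [IsScalarTower K (WeylAlg n K) M]
    (m q : ℕ) (g : Fin m → M) (h : Fin q → M)
    (hg : Submodule.span (WeylAlg n K) (Set.range g) = ⊤)
    (hh : Submodule.span (WeylAlg n K) (Set.range h) = ⊤)
    (ψ ψ' : Polynomial ℚ)
    (hψ : ∃ s : ℤ, ∀ r : ℤ, s ≤ r →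
      ψ.eval (r : ℚ) = (Module.finrank K (modFil n K M m g r) : ℚ))
    (hψ' : ∃ s : ℤ, ∀ r : ℤ, s ≤ r →
      ψ'.eval (r : ℚ) = (Module.finrank K (modFil n K M q h r) : ℚ)) :
    ψ.natDegree = ψ'.natDegree ∧
      (ψ.natDegree.factorial : ℚ) * ψ.leadingCoeff =
        (ψ'.natDegree.factorial : ℚ) * ψ'.leadingCoeff := by
  replace hψ := Filter.eventually_atTop.2 hψ
  replace hψ' := Filter.eventually_atTop.2 hψ'
  have hshift {c : ℤ} {f : ℤ → Prop} (hf : ∀ᶠ r in Filter.atTop, f r) :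
      ∀ᶠ r in Filter.atTop, f (r + c) :=
    (Filter.tendsto_atTop_add_const_right _ c Filter.tendsto_id).eventually hf
  obtain ⟨c₁, hc₁⟩ := exists_modFil_le_modFil_add g hh
  obtain ⟨c₂, hc₂⟩ := exists_modFil_le_modFil_add h hg
  obtain ⟨hdeg, hlc⟩ := Polynomial.natDegree_eq_and_leadingCoeff_eq_of_eventually_le_shift
    (a := c₁) (b := c₂)
    (hψ.mono fun _ hr => hr ▸ Nat.cast_nonneg _) (hψ'.mono fun _ hr => hr ▸ Nat.cast_nonneg _)
    ((hψ.and (hshift hψ')).mono fun r hr => by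
      rw [hr.1, hr.2]
      exact_mod_cast Submodule.finrank_mono (hc₁ r))
    ((hψ'.and (hshift hψ)).mono fun r hr => by
      rw [hr.1, hr.2]
      exact_mod_cast Submodule.finrank_mono (hc₂ r))
  exact ⟨hdeg, by rw [hdeg, hlc]⟩

theorem statement_7 (n : ℕ) (K : Type) [Field K] [CharZero K]
    (M : Type) [AddCommGroup M] [Module K M] [Module (WeylAlg n K) M]
    [IsScalarTower K (WeylAlg n K) M]
    (m q : ℕ) (g : Fin m → M) (h : Fin q → M)
    (hg : Submodule.span (WeylAlg n K) (Set.range g) = ⊤)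
    (hh : Submodule.span (WeylAlg n K) (Set.range h) = ⊤)
    (ψ ψ' : Polynomial ℚ)
    (hψ : ∃ s : ℤ, ∀ r : ℤ, s ≤ r →
      ψ.eval (r : ℚ) = (Module.finrank K (modFil n K M m g r) : ℚ))
    (hψ' : ∃ s : ℤ, ∀ r : ℤ, s ≤ r →
      ψ'.eval (r : ℚ) = (Module.finrank K (modFil n K M q h r) : ℚ)) :
    ψ.natDegree = ψ'.natDegree ∧
      (ψ.natDegree.factorial : ℚ) * ψ.leadingCoeff =
        (ψ'.natDegree.factorial : ℚ) * ψ'.leadingCoeff :=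
  statement_7_general n K M m q g h hg hh ψ ψ' hψ hψ'
end

section
/- Let K be a field of characteristic zero, A_n(K) the Weyl algebra with a fixed partition of {1,…,n} into blocks of sizes n_1,…,n_p, E a free left A_n(K)-module with free generators e_1,…,e_m, and N an A_n(K)-submodule of E. Then there exists a finite set G = {g_1,…,g_r} ⊆ N which is a Gröbner basis of N with respect to the orders <_1,…,<_p, i.e., for every nonzero f ∈ N there exists g_i ∈ G with ρ(g_i) | ρ(f). -/
set_option synthInstance.maxHeartbeats 400000
set_option maxHeartbeats 1000000

open MvPolynomial

/-- The `j`-th order of the monomial `x^α ∂^β` with respect to the partition `B`. -/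
def ordBlk {n p : ℕ} (B : Fin n → Fin p) (α β : Fin n → ℕ) (j : Fin p) : ℕ :=
  ∑ i ∈ Finset.univ.filter (fun i => B i = j), (α i + β i)

/-- An exponent pair `(α, β)` encoding the monomial `x^α ∂^β`. -/
abbrev WExp (n : ℕ) := (Fin n → ℕ) × (Fin n → ℕ)

/-- A term `θ e_i` of the free module `E`: a monomial together with the index of a
free generator. -/
abbrev WTerm (n m : ℕ) := WExp n × Fin m

/-- The `j`-th order of a term. -/
def ordT {n p m : ℕ} (B : Fin n → Fin p) (j : Fin p) (t : WTerm n m) : ℕ :=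
  ordBlk B t.1.1 t.1.2 j

/-- The comparison vector of a monomial used to define the order `<_j`:
the `j`-th order, then the other orders, then the exponents of the `j`-th block,
then the remaining exponents. -/
def keyList {n p : ℕ} (B : Fin n → Fin p) (j : Fin p) (t : WExp n) : List ℕ :=
  [ordBlk B t.1 t.2 j] ++
  (((List.finRange p).filter fun k => k ≠ j).map (ordBlk B t.1 t.2)) ++
  (((List.finRange n).filter fun i => B i = j).map t.1) ++
  (((List.finRange n).filter fun i => B i = j).map t.2) ++
  ((((List.finRange n).filter fun i => B i ≠ j).map fun i => [t.1 i, t.2 i]).flatten)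

/-- The order `<_j` on monomials. -/
def monLt {n p : ℕ} (B : Fin n → Fin p) (j : Fin p) (s t : WExp n) : Prop :=
  List.Lex (· < ·) (keyList B j s) (keyList B j t)

/-- The order `<_j` on terms of the free module. -/
def termLt {n p m : ℕ} (B : Fin n → Fin p) (j : Fin p) (s t : WTerm n m) : Prop :=
  monLt B j s.1 t.1 ∨ (s.1 = t.1 ∧ s.2 < t.2)

/-- Divisibility of terms: same free generator and componentwise smaller exponents. -/
def tdvd {n m : ℕ} (s t : WTerm n m) : Prop :=
  s.2 = t.2 ∧ s.1.1 ≤ t.1.1 ∧ s.1.2 ≤ t.1.2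

/-- The quotient monomial `t/s` of two terms with `s ∣ t`. -/
def tquot {n m : ℕ} (t s : WTerm n m) : WExp n :=
  (t.1.1 - s.1.1, t.1.2 - s.1.2)

/-- The element `θ e_i` of the free module `E = A_n(K)^m`. -/
noncomputable def termVal {n m : ℕ} (K : Type) [Field K] (t : WTerm n m) :
    Fin m → WeylAlg n K :=
  Pi.single t.2 (wMono n K t.1.1 t.1.2)

/-- `c` is the coefficient expansion of `f ∈ E` in the basis of terms. -/
def Represents {n m : ℕ} {K : Type} [Field K] (c : WTerm n m →₀ K)
    (f : Fin m → WeylAlg n K) : Prop :=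
  f = c.sum fun t a => a • termVal K t

/-- `u` is the `j`-th leader of the element represented by `c`: the greatest term
appearing in it with respect to `<_j`. -/
def IsLeader {n p m : ℕ} {K : Type} [Field K] (B : Fin n → Fin p) (j : Fin p)
    (c : WTerm n m →₀ K) (u : WTerm n m) : Prop :=
  u ∈ c.support ∧ ∀ t ∈ c.support, t ≠ u → termLt B j t u

/-- `ρ(g) ∣ ρ(f)`, where `u g`, `u f` are the leaders of `g` and `f`:
the first leaders divide and `d_j(g) ≤ d_j(f)` for all `j`. -/
def rhoDvd {n p m : ℕ} (B : Fin n → Fin p) (hp : 0 < p)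
    (ug uf : Fin p → WTerm n m) : Prop :=
  tdvd (ug ⟨0, hp⟩) (uf ⟨0, hp⟩) ∧
  ∀ j, (ordT B j (ug j) : ℤ) - (ordT B j (ug ⟨0, hp⟩) : ℤ) ≤
       (ordT B j (uf j) : ℤ) - (ordT B j (uf ⟨0, hp⟩) : ℤ)

/-- One-step `(<_k, <_{i₁}, …, <_{i_l})`-reduction of `f` to `h` modulo `g`, where `cg`
is the expansion of `g` and `ug j` its `j`-th leader. -/
def RedStep {n p m : ℕ} {K : Type} [Field K] (B : Fin n → Fin p)
    (k : Fin p) (is : List (Fin p))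
    (g : Fin m → WeylAlg n K) (cg : WTerm n m →₀ K) (ug : Fin p → WTerm n m)
    (f h : Fin m → WeylAlg n K) : Prop :=
  ∃ cf : WTerm n m →₀ K, Represents cf f ∧
    ∃ w ∈ cf.support, tdvd (ug k) w ∧
      (∀ i ∈ is, ∀ uf : WTerm n m, IsLeader B i cf uf →
        ordBlk B (tquot w (ug k)).1 (tquot w (ug k)).2 i + ordT B i (ug i) ≤
          ordT B i uf) ∧
      h = f - (cf w * (cg (ug k))⁻¹) •
        fun j => wMono n K (tquot w (ug k)).1 (tquot w (ug k)).2 * g j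

/-- The element represented by `cf` is `(<_k, <_{i₁}, …, <_{i_l})`-reduced with respect to an
element with leaders `ug`. -/
def ReducedWrt {n p m : ℕ} {K : Type} [Field K] (B : Fin n → Fin p)
    (k : Fin p) (is : List (Fin p))
    (cf : WTerm n m →₀ K) (ug : Fin p → WTerm n m) : Prop :=
  ∀ w ∈ cf.support, tdvd (ug k) w →
    ∃ i ∈ is, ∃ uf : WTerm n m, IsLeader B i cf uf ∧
      ordT B i uf <
        ordBlk B (tquot w (ug k)).1 (tquot w (ug k)).2 i + ordT B i (ug i)

/-!
The map `ρ` sends a nonzero element to its first leader together with the differences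
`d_j ≥ 0`, i.e. to a tuple of natural numbers, in such a way that divisibility of the `ρ`'s
is the componentwise order. By Dickson's lemma the minimal `ρ`-values of the nonzero elements
of `N` are finitely many, and any choice of one element of `N` for each of them is a Gröbner
basis.
-/

theorem exists_fin_family_forall_exists_le {X α : Type*} [PartialOrder α] [WellQuasiOrderedLE α]
    (P : X → Prop) (φ : X → α) :
    ∃ (r : ℕ) (x : Fin r → X), (∀ i, P (x i)) ∧ ∀ y, P y → ∃ i, φ (x i) ≤ φ y := by
  set M := {a | Minimal (· ∈ φ '' {y | P y}) a}
  have : Finite M :=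
    (WellQuasiOrderedLE.finite_of_isAntichain (setOfPred_minimal_antichain _)).to_subtype
  obtain ⟨r, ⟨e⟩⟩ := Finite.exists_equiv_fin M
  have hpre : ∀ a : M, ∃ y, P y ∧ φ y = a := fun a => a.2.prop
  choose pre hPpre hφpre using hpre
  refine ⟨r, fun i => pre (e.symm i), fun i => hPpre _, fun y hy => ?_⟩
  obtain ⟨a, hay, ha⟩ :=
    (Set.isPWO_of_wellQuasiOrderedLE _).exists_le_minimal (Set.mem_image_of_mem φ hy)
  exact ⟨e ⟨a, ha⟩, by simpa [hφpre] using hay⟩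

theorem List.Lex.head_le_head {α : Type*} [Preorder α] {a b : α} {l₁ l₂ : List α}
    (h : List.Lex (· < ·) (a :: l₁) (b :: l₂)) : a ≤ b := by
  cases h with
  | cons _ => exact le_rfl
  | rel h => exact h.le

section Leaders

variable {n p m : ℕ} (B : Fin n → Fin p)

theorem ordT_le_of_termLt {j : Fin p} {s t : WTerm n m} (h : termLt B j s t) :
    ordT B j s ≤ ordT B j t := by
  rcases h with hlt | ⟨heq, -⟩
  · exact List.Lex.head_le_head hlt
  · simp only [ordT, heq, le_rfl]

theorem IsLeader.ordT_le {K : Type} [Field K] {j : Fin p} {c : WTerm n m →₀ K} {u t : WTerm n m}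
    (hu : IsLeader B j c u) (ht : t ∈ c.support) : ordT B j t ≤ ordT B j u := by
  by_cases htu : t = u
  · rw [htu]
  · exact ordT_le_of_termLt B (hu.2 t ht htu)

/-- The free generator of the first leader is recorded as an indicator vector, so that
comparable values have the same generator. -/
def rhoVec (hp : 0 < p) (u : Fin p → WTerm n m) : (Fin m → ℕ) × WExp n × (Fin p → ℕ) :=
  (Pi.single (u ⟨0, hp⟩).2 1, (u ⟨0, hp⟩).1, fun j => ordT B j (u j) - ordT B j (u ⟨0, hp⟩))

/-- The truncated subtractions in `rhoVec` are harmless because the `j`-th leader has the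
largest `j`-th order among all terms. -/
theorem rhoDvd_of_rhoVec_le {K : Type} [Field K] (hp : 0 < p) {cg cf : WTerm n m →₀ K}
    {ug uf : Fin p → WTerm n m} (hg : ∀ j, IsLeader B j cg (ug j))
    (hf : ∀ j, IsLeader B j cf (uf j)) (h : rhoVec B hp ug ≤ rhoVec B hp uf) :
    rhoDvd B hp ug uf := by
  obtain ⟨hgen, ⟨hα, hβ⟩, hd⟩ := h
  refine ⟨⟨?_, hα, hβ⟩, fun j => ?_⟩
  · by_contra hne
    simpa [rhoVec, Pi.single_apply, Ne.symm hne] using hgen (ug ⟨0, hp⟩).2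
  · have hgj := (hg j).ordT_le B (hg ⟨0, hp⟩).1
    have hfj := (hf j).ordT_le B (hf ⟨0, hp⟩).1
    have hdj := hd j
    simp only [rhoVec] at hdj
    omega

end Leaders

theorem statement_12_general (n p m : ℕ) (hp : 0 < p) (K : Type) [Field K]
    (B : Fin n → Fin p)
    (N : Submodule (WeylAlg n K) (Fin m → WeylAlg n K)) :
    ∃ (r : ℕ) (g : Fin r → Fin m → WeylAlg n K)
      (cg : Fin r → (WTerm n m →₀ K)) (ug : Fin r → Fin p → WTerm n m),
      (∀ i, g i ∈ N) ∧ (∀ i, g i ≠ 0) ∧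
      (∀ i, Represents (cg i) (g i)) ∧
      (∀ i j, IsLeader B j (cg i) (ug i j)) ∧
      ∀ f ∈ N, f ≠ 0 → ∀ (cf : WTerm n m →₀ K) (uf : Fin p → WTerm n m),
        Represents cf f → (∀ j, IsLeader B j cf (uf j)) →
        ∃ i, rhoDvd B hp (ug i) uf := by
  obtain ⟨r, x, hx, hcover⟩ := exists_fin_family_forall_exists_le
    (fun x : (Fin m → WeylAlg n K) × (WTerm n m →₀ K) × (Fin p → WTerm n m) =>
      x.1 ∈ N ∧ x.1 ≠ 0 ∧ Represents x.2.1 x.1 ∧ ∀ j, IsLeader B j x.2.1 (x.2.2 j))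
    (fun x => rhoVec B hp x.2.2)
  refine ⟨r, fun i => (x i).1, fun i => (x i).2.1, fun i => (x i).2.2, fun i => (hx i).1,
    fun i => (hx i).2.1, fun i => (hx i).2.2.1, fun i => (hx i).2.2.2, ?_⟩
  intro f hf hf0 cf uf hcf huf
  obtain ⟨i, hi⟩ := hcover (f, cf, uf) ⟨hf, hf0, hcf, huf⟩
  exact ⟨i, rhoDvd_of_rhoVec_le B hp (hx i).2.2.2 huf hi⟩

theorem statement_12 (n p m : ℕ) (hp : 0 < p) (K : Type) [Field K] [CharZero K]
    (nn : Fin p → ℕ) (hn : ∑ j, nn j = n)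
    (B : Fin n → Fin p) (hBmono : Monotone B)
    (hBcard : ∀ j, (Finset.univ.filter fun i => B i = j).card = nn j)
    (N : Submodule (WeylAlg n K) (Fin m → WeylAlg n K)) :
    ∃ (r : ℕ) (g : Fin r → Fin m → WeylAlg n K)
      (cg : Fin r → (WTerm n m →₀ K)) (ug : Fin r → Fin p → WTerm n m),
      (∀ i, g i ∈ N) ∧ (∀ i, g i ≠ 0) ∧
      (∀ i, Represents (cg i) (g i)) ∧
      (∀ i j, IsLeader B j (cg i) (ug i j)) ∧
      ∀ f ∈ N, f ≠ 0 → ∀ (cf : WTerm n m →₀ K) (uf : Fin p → WTerm n m),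
        Represents cf f → (∀ j, IsLeader B j cf (uf j)) →
        ∃ i, rhoDvd B hp (ug i) uf :=
  statement_12_general n p m hp K B N
end
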